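/- arXiv:1907.02405 — 2 statements merged into one kernel-verified Lean document; each statement's English description precedes it below -/
import Mathlib

section
/- Correctness of the forward-backward decomposition: for every t ∈ [1, T] and inventory level i, f(t, i) + f_r(t, i) is a lower bound on the cost of any feasible solution of (L) with I_t = i, and min over i of f(t, i) + f_r(t, i) equals the optimal cost of (L). Consequently the filtering rule "if f(t, i) + f_r(t, i) > C̅ then I_t ≠ i" is sound: it removes only values i not attained by any feasible solution of cost at most C̅. -/
/-- Feasibility for `(L)` (no lower bounds). -/
def Feasible (T : ℕ) (d ahi bhi : ℕ → ℕ) (X I : ℕ → ℕ) : Prop :=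
  I 0 = 0 ∧ I T = 0 ∧
  ∀ t ∈ Finset.Icc 1 T, I (t - 1) + X t = d t + I t ∧ X t ≤ ahi t ∧ I t ≤ bhi t

/-- Total cost over periods `1..T`. -/
def planCost (T : ℕ) (p h s : ℕ → ℕ) (X I : ℕ → ℕ) : ℕ :=
  ∑ t ∈ Finset.Icc 1 T, (p t * X t + h t * I t + if 0 < X t then s t else 0)

/-- Forward DP value `f(t, i)`: minimum cost over periods `1..t` of satisfying
demands `d_1..d_t` with ending inventory `i` (infimum in `ℕ∞`, `⊤` if none). -/
noncomputable def fwdCost (d p h s ahi bhi : ℕ → ℕ) (t i : ℕ) : ℕ∞ :=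
  sInf {c : ℕ∞ | ∃ X I : ℕ → ℕ, I 0 = 0 ∧ I t = i ∧
    (∀ r ∈ Finset.Icc 1 t, I (r - 1) + X r = d r + I r ∧ X r ≤ ahi r ∧ I r ≤ bhi r) ∧
    c = ((∑ r ∈ Finset.Icc 1 t,
      (p r * X r + h r * I r + if 0 < X r then s r else 0) : ℕ) : ℕ∞)}

/-- Backward DP value `f_r(t, i)`: minimum cost over periods `t+1..T` of
satisfying demands `d_{t+1}..d_T` with starting inventory `i` and `I T = 0`. -/
noncomputable def bwdCost (T : ℕ) (d p h s ahi bhi : ℕ → ℕ) (t i : ℕ) : ℕ∞ :=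
  sInf {c : ℕ∞ | ∃ X I : ℕ → ℕ, I t = i ∧ I T = 0 ∧
    (∀ r ∈ Finset.Icc (t + 1) T, I (r - 1) + X r = d r + I r ∧ X r ≤ ahi r ∧ I r ≤ bhi r) ∧
    c = ((∑ r ∈ Finset.Icc (t + 1) T,
      (p r * X r + h r * I r + if 0 < X r then s r else 0) : ℕ) : ℕ∞)}

/-!
A plan of `(L)` with `I t = i` splits at period `t` into a plan for periods `1..t` ending
at stock `i` and a plan for periods `t+1..T` starting from stock `i`; the cost splits
accordingly, so `f(t, i) + f_r(t, i)` bounds it from below. Conversely, the two infima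
are attained (`ℕ∞` is well ordered) and two optimal partial plans meeting at the same
stock `i` glue back to a plan of `(L)` whose cost is `f(t, i) + f_r(t, i)`.
-/

open Finset

def stageCost (p h s X I : ℕ → ℕ) (r : ℕ) : ℕ :=
  p r * X r + h r * I r + if 0 < X r then s r else 0

def spliceAt (t : ℕ) (f g : ℕ → ℕ) (r : ℕ) : ℕ :=
  if r ≤ t then f r else g r

def BalancedOn (d ahi bhi X I : ℕ → ℕ) (S : Finset ℕ) : Prop :=
  ∀ r ∈ S, I (r - 1) + X r = d r + I r ∧ X r ≤ ahi r ∧ I r ≤ bhi r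

section

variable {T t : ℕ} {d p h s ahi bhi X I : ℕ → ℕ}

theorem ENat.sInf_mem_of_ne_top {S : Set ℕ∞} (h : sInf S ≠ ⊤) : sInf S ∈ S :=
  csInf_mem (Set.nonempty_iff_ne_empty.mpr fun hS => h (by rw [hS, sInf_empty]))

theorem sum_Icc_one_eq_add {M : Type*} [AddCommMonoid M] (g : ℕ → M) (htT : t ≤ T) :
    ∑ r ∈ Icc 1 T, g r = ∑ r ∈ Icc 1 t, g r + ∑ r ∈ Icc (t + 1) T, g r := by
  have hIcc : ∀ n, Icc 1 n = Ioc 0 n := Icc_add_one_left_eq_Ioc 0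
  rw [hIcc, hIcc, Icc_add_one_left_eq_Ioc]
  exact (sum_Ioc_consecutive g t.zero_le htT).symm

theorem feasible_iff :
    Feasible T d ahi bhi X I ↔ I 0 = 0 ∧ I T = 0 ∧ BalancedOn d ahi bhi X I (Icc 1 T) :=
  Iff.rfl

theorem planCost_eq : planCost T p h s X I = ∑ r ∈ Icc 1 T, stageCost p h s X I r := rfl

theorem fwdCost_eq (i : ℕ) :
    fwdCost d p h s ahi bhi t i = sInf {c : ℕ∞ | ∃ X I : ℕ → ℕ, I 0 = 0 ∧ I t = i ∧
      BalancedOn d ahi bhi X I (Icc 1 t) ∧ c = ↑(∑ r ∈ Icc 1 t, stageCost p h s X I r)} :=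
  rfl

theorem bwdCost_eq (i : ℕ) :
    bwdCost T d p h s ahi bhi t i = sInf {c : ℕ∞ | ∃ X I : ℕ → ℕ, I t = i ∧ I T = 0 ∧
      BalancedOn d ahi bhi X I (Icc (t + 1) T) ∧
        c = ↑(∑ r ∈ Icc (t + 1) T, stageCost p h s X I r)} :=
  rfl

theorem BalancedOn.mono {S S' : Finset ℕ} (hS : BalancedOn d ahi bhi X I S) (h : S' ⊆ S) :
    BalancedOn d ahi bhi X I S' :=
  fun r hr => hS r (h hr)

theorem fwdCost_le (h0 : I 0 = 0) (hbal : BalancedOn d ahi bhi X I (Icc 1 t)) :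
    fwdCost d p h s ahi bhi t (I t) ≤ ↑(∑ r ∈ Icc 1 t, stageCost p h s X I r) :=
  sInf_le ⟨X, I, h0, rfl, hbal, rfl⟩

theorem bwdCost_le (hT : I T = 0) (hbal : BalancedOn d ahi bhi X I (Icc (t + 1) T)) :
    bwdCost T d p h s ahi bhi t (I t) ≤ ↑(∑ r ∈ Icc (t + 1) T, stageCost p h s X I r) :=
  sInf_le ⟨X, I, rfl, hT, hbal, rfl⟩

theorem fwdCost_add_bwdCost_le_planCost (htT : t ≤ T) (hF : Feasible T d ahi bhi X I) :
    fwdCost d p h s ahi bhi t (I t) + bwdCost T d p h s ahi bhi t (I t) ≤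
      ↑(planCost T p h s X I) := by
  obtain ⟨h0, hT, hbal⟩ := feasible_iff.mp hF
  rw [planCost_eq, sum_Icc_one_eq_add _ htT, Nat.cast_add]
  exact add_le_add
    (fwdCost_le h0 (hbal.mono (Icc_subset_Icc_right htT)))
    (bwdCost_le hT (hbal.mono (Icc_subset_Icc_left (Nat.le_add_left 1 t))))

theorem exists_fwdCost_eq {i : ℕ} (hi : fwdCost d p h s ahi bhi t i ≠ ⊤) :
    ∃ X I : ℕ → ℕ, I 0 = 0 ∧ I t = i ∧ BalancedOn d ahi bhi X I (Icc 1 t) ∧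
      fwdCost d p h s ahi bhi t i = ↑(∑ r ∈ Icc 1 t, stageCost p h s X I r) := by
  rw [fwdCost_eq] at hi ⊢
  exact ENat.sInf_mem_of_ne_top hi

theorem exists_bwdCost_eq {i : ℕ} (hi : bwdCost T d p h s ahi bhi t i ≠ ⊤) :
    ∃ X I : ℕ → ℕ, I t = i ∧ I T = 0 ∧ BalancedOn d ahi bhi X I (Icc (t + 1) T) ∧
      bwdCost T d p h s ahi bhi t i = ↑(∑ r ∈ Icc (t + 1) T, stageCost p h s X I r) := by
  rw [bwdCost_eq] at hi ⊢
  exact ENat.sInf_mem_of_ne_top hi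

theorem spliceAt_of_le {f g : ℕ → ℕ} {r : ℕ} (hr : r ≤ t) : spliceAt t f g r = f r :=
  if_pos hr

theorem spliceAt_of_lt {f g : ℕ → ℕ} {r : ℕ} (hr : t < r) : spliceAt t f g r = g r :=
  if_neg hr.not_ge

theorem spliceAt_of_ge {f g : ℕ → ℕ} {r : ℕ} (hjoin : f t = g t) (hr : t ≤ r) :
    spliceAt t f g r = g r := by
  rcases hr.eq_or_lt with rfl | hlt
  · exact (spliceAt_of_le le_rfl).trans hjoin
  · exact spliceAt_of_lt hlt

theorem feasible_spliceAt (htT : t ≤ T) {X₁ I₁ X₂ I₂ : ℕ → ℕ} (h0 : I₁ 0 = 0)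
    (hbal₁ : BalancedOn d ahi bhi X₁ I₁ (Icc 1 t)) (hjoin : I₁ t = I₂ t) (hT : I₂ T = 0)
    (hbal₂ : BalancedOn d ahi bhi X₂ I₂ (Icc (t + 1) T)) :
    Feasible T d ahi bhi (spliceAt t X₁ X₂) (spliceAt t I₁ I₂) := by
  refine feasible_iff.mpr
    ⟨(spliceAt_of_le t.zero_le).trans h0, (spliceAt_of_ge hjoin htT).trans hT, fun r hr => ?_⟩
  rcases le_or_gt r t with hrt | hrt
  · rw [spliceAt_of_le hrt, spliceAt_of_le hrt,
      spliceAt_of_le ((Nat.sub_le r 1).trans hrt)]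
    exact hbal₁ r (mem_Icc.mpr ⟨(mem_Icc.mp hr).1, hrt⟩)
  · rw [spliceAt_of_lt hrt, spliceAt_of_ge hjoin hrt.le,
      spliceAt_of_ge hjoin (Nat.le_sub_one_of_lt hrt)]
    exact hbal₂ r (mem_Icc.mpr ⟨hrt, (mem_Icc.mp hr).2⟩)

theorem planCost_spliceAt (htT : t ≤ T) (X₁ I₁ X₂ I₂ : ℕ → ℕ) :
    planCost T p h s (spliceAt t X₁ X₂) (spliceAt t I₁ I₂) =
      ∑ r ∈ Icc 1 t, stageCost p h s X₁ I₁ r + ∑ r ∈ Icc (t + 1) T, stageCost p h s X₂ I₂ r := by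
  rw [planCost_eq, sum_Icc_one_eq_add _ htT]
  congr 1 <;> refine sum_congr rfl fun r hr => ?_
  · have hrt := (mem_Icc.mp hr).2
    simp only [stageCost, spliceAt_of_le hrt]
  · have hrt := (mem_Icc.mp hr).1
    simp only [stageCost, spliceAt_of_lt hrt]

theorem sInf_planCost_le_fwdCost_add_bwdCost (htT : t ≤ T) (i : ℕ) :
    sInf {c : ℕ∞ | ∃ X I : ℕ → ℕ, Feasible T d ahi bhi X I ∧ c = ↑(planCost T p h s X I)} ≤
      fwdCost d p h s ahi bhi t i + bwdCost T d p h s ahi bhi t i := by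
  rcases eq_or_ne (fwdCost d p h s ahi bhi t i) ⊤ with hf | hf
  · simp [hf]
  rcases eq_or_ne (bwdCost T d p h s ahi bhi t i) ⊤ with hb | hb
  · simp [hb]
  obtain ⟨X₁, I₁, h0, hi₁, hbal₁, hf_eq⟩ := exists_fwdCost_eq hf
  obtain ⟨X₂, I₂, hi₂, hT, hbal₂, hb_eq⟩ := exists_bwdCost_eq hb
  refine sInf_le_of_le
    ⟨_, _, feasible_spliceAt htT h0 hbal₁ (hi₁.trans hi₂.symm) hT hbal₂, rfl⟩ ?_
  rw [planCost_spliceAt htT, Nat.cast_add, hf_eq, hb_eq]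

theorem iInf_fwdCost_add_bwdCost (htT : t ≤ T) :
    ⨅ i : ℕ, fwdCost d p h s ahi bhi t i + bwdCost T d p h s ahi bhi t i =
      sInf {c : ℕ∞ | ∃ X I : ℕ → ℕ, Feasible T d ahi bhi X I ∧ c = ↑(planCost T p h s X I)} := by
  refine le_antisymm (le_sInf ?_) (le_iInf (sInf_planCost_le_fwdCost_add_bwdCost htT))
  rintro c ⟨X, I, hF, rfl⟩
  exact (iInf_le _ (I t)).trans (fwdCost_add_bwdCost_le_planCost htT hF)

end

/-- Correctness of the forward–backward decomposition: `f(t,i) + f_r(t,i)` is a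
lower bound on the cost of any feasible solution of `(L)` with `I t = i`; the
minimum over `i` of `f(t,i) + f_r(t,i)` equals the optimal cost of `(L)`; and
the filtering rule "`f(t,i) + f_r(t,i) > C̅ ⟹ I t ≠ i`" is sound. -/
theorem forward_backward_decomposition_correct
    (T : ℕ) (d p h s ahi bhi : ℕ → ℕ) (t : ℕ) (ht : t ∈ Finset.Icc 1 T) :
    (∀ X I : ℕ → ℕ, Feasible T d ahi bhi X I →
      fwdCost d p h s ahi bhi t (I t) + bwdCost T d p h s ahi bhi t (I t) ≤
        (planCost T p h s X I : ℕ∞)) ∧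
    ((⨅ i : ℕ, fwdCost d p h s ahi bhi t i + bwdCost T d p h s ahi bhi t i) =
      sInf {c : ℕ∞ | ∃ X I : ℕ → ℕ, Feasible T d ahi bhi X I ∧
        c = (planCost T p h s X I : ℕ∞)}) ∧
    (∀ (Cbar : ℕ) (i : ℕ),
      (Cbar : ℕ∞) < fwdCost d p h s ahi bhi t i + bwdCost T d p h s ahi bhi t i →
      ¬ ∃ X I : ℕ → ℕ, Feasible T d ahi bhi X I ∧ I t = i ∧
        planCost T p h s X I ≤ Cbar) := by
  have htT := (mem_Icc.mp ht).2
  refine ⟨fun X I hF => fwdCost_add_bwdCost_le_planCost htT hF, iInf_fwdCost_add_bwdCost htT, ?_⟩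
  rintro Cbar i hlt ⟨X, I, hF, rfl, hle⟩
  exact ((fwdCost_add_bwdCost_le_planCost htT hF).trans (Nat.cast_le.mpr hle)).not_gt hlt
end

section
/- Soundness of WISP-support filtering: let [u,v] be an interval, let lbBefore(u−1) be a lower bound on the cost of satisfying demands d_1..d_{u−1} in (L), let lbAfter(v+1) be a lower bound on the cost of satisfying demands d_{v+1}..d_T in (L), and let f, f_r be the forward/backward DP values of sub-problem (L_{u,v}). Then for t ∈ [u,v] and any inventory value i < Σ_{k=t+1}^{v} d_k, if lbBefore(u−1) + f(t, i) + f_r(t, i) + lbAfter(v+1) > C̅, then no feasible solution of (L) of cost at most C̅ has I_t = i. -/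
/-- Demands of sub-problem `(L_{u,v})`: zero outside `[u, v]`. -/
def subd (u v : ℕ) (d : ℕ → ℕ) : ℕ → ℕ := fun t => if t ∈ Finset.Icc u v then d t else 0

/-- Setup costs of sub-problem `(L_{u,v})`: zero outside `[u, v]`. -/
def subs (u v : ℕ) (s : ℕ → ℕ) : ℕ → ℕ := fun t => if t ∈ Finset.Icc u v then s t else 0

namespace WispAux

/-- Cumulative sum over periods `1..t`. -/
def cum (f : ℕ → ℕ) (t : ℕ) : ℕ := ∑ k ∈ Finset.Icc 1 t, f k

lemma cum_zero (f : ℕ → ℕ) : cum f 0 = 0 := by simp [cum]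

lemma cum_succ (f : ℕ → ℕ) {t : ℕ} (h : 1 ≤ t) : cum f t = cum f (t - 1) + f t := by
  obtain ⟨n, rfl⟩ : ∃ n, t = n + 1 := ⟨t - 1, by omega⟩
  simp only [cum, Nat.add_sub_cancel]
  rw [Finset.sum_Icc_succ_top (by omega)]

lemma cum_mono (f : ℕ → ℕ) {s t : ℕ} (h : s ≤ t) : cum f s ≤ cum f t :=
  Finset.sum_le_sum_of_subset (Finset.Icc_subset_Icc_right h)

lemma flow {T : ℕ} {d ahi bhi X I : ℕ → ℕ} (hf : Feasible T d ahi bhi X I) :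
    ∀ t, t ≤ T → cum X t = cum d t + I t := by
  intro t
  induction t with
  | zero => intro _; simp [cum_zero, hf.1]
  | succ n ih =>
    intro hT
    have h3 := (hf.2.2 (n + 1) (Finset.mem_Icc.mpr ⟨by omega, hT⟩)).1
    have h4 := ih (by omega)
    rw [cum_succ X (t := n + 1) (by omega), cum_succ d (t := n + 1) (by omega)]
    simp only [Nat.add_sub_cancel] at *
    omega

/-- Production of the sub-plan for interval `[l, r]` (FIFO flow split). -/
def sX (d X : ℕ → ℕ) (l r t : ℕ) : ℕ :=
  (min (cum X t) (cum d r) - min (cum X t) (cum d (l - 1)))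
  - (min (cum X (t - 1)) (cum d r) - min (cum X (t - 1)) (cum d (l - 1)))

/-- Inventory of the sub-plan for interval `[l, r]`. -/
def sI (d X : ℕ → ℕ) (l r t : ℕ) : ℕ :=
  (min (cum X t) (cum d r) - min (cum X t) (cum d (l - 1)))
  - (min (cum d t) (cum d r) - min (cum d t) (cum d (l - 1)))

/- Arithmetic core: period `t` inside the interval. -/
private lemma arith_mid (x0 x1 y0 y1 a b dt Xt It0 It ah bh : ℕ)
    (hP : x1 = x0 + Xt) (hD : y1 = y0 + dt) (hf1 : x1 = y1 + It) (hf0 : x0 = y0 + It0)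
    (h2 : a ≤ y0) (h3 : y1 ≤ b) (hX : Xt ≤ ah) (hI : It ≤ bh) :
    ((min x0 b - min x0 a) - (min y0 b - min y0 a))
      + ((min x1 b - min x1 a) - (min x0 b - min x0 a))
      = dt + ((min x1 b - min x1 a) - (min y1 b - min y1 a)) ∧
    (min x1 b - min x1 a) - (min x0 b - min x0 a) ≤ ah ∧
    (min x1 b - min x1 a) - (min y1 b - min y1 a) ≤ bh := by
  have m1 : min x1 a = a := min_eq_right (by omega)
  have m2 : min x0 a = a := min_eq_right (by omega)
  have m3 : min y1 b = y1 := min_eq_left h3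
  have m4 : min y1 a = a := min_eq_right (by omega)
  have m5 : min y0 b = y0 := min_eq_left (by omega)
  have m6 : min y0 a = a := min_eq_right h2
  rw [m1, m2, m3, m4, m5, m6]
  omega

/- Arithmetic core: period `t` after the interval. -/
private lemma arith_right (x0 x1 y0 y1 a b dt Xt It0 It ah bh : ℕ)
    (hP : x1 = x0 + Xt) (hD : y1 = y0 + dt) (hf1 : x1 = y1 + It) (hf0 : x0 = y0 + It0)
    (hab : a ≤ b) (h3 : b ≤ y0) (hX : Xt ≤ ah) (hI : It ≤ bh) :
    ((min x0 b - min x0 a) - (min y0 b - min y0 a))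
      + ((min x1 b - min x1 a) - (min x0 b - min x0 a))
      = 0 + ((min x1 b - min x1 a) - (min y1 b - min y1 a)) ∧
    (min x1 b - min x1 a) - (min x0 b - min x0 a) ≤ ah ∧
    (min x1 b - min x1 a) - (min y1 b - min y1 a) ≤ bh := by
  have m1 : min x1 a = a := min_eq_right (by omega)
  have m2 : min x0 a = a := min_eq_right (by omega)
  have m3 : min y1 b = b := min_eq_right (by omega)
  have m4 : min y1 a = a := min_eq_right (by omega)
  have m5 : min y0 b = b := min_eq_right h3
  have m6 : min y0 a = a := min_eq_right (by omega)
  have m7 : min x1 b = b := min_eq_right (by omega)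
  have m8 : min x0 b = b := min_eq_right (by omega)
  rw [m1, m2, m3, m4, m5, m6, m7, m8]
  omega

/- Arithmetic core: period `t` before the interval. -/
private lemma arith_left (x0 x1 y0 y1 a b dt Xt It0 It ah bh : ℕ)
    (hP : x1 = x0 + Xt) (hD : y1 = y0 + dt) (hf1 : x1 = y1 + It) (hf0 : x0 = y0 + It0)
    (hab : a ≤ b) (h3 : y1 ≤ a) (hX : Xt ≤ ah) (hI : It ≤ bh) :
    ((min x0 b - min x0 a) - (min y0 b - min y0 a))
      + ((min x1 b - min x1 a) - (min x0 b - min x0 a))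
      = 0 + ((min x1 b - min x1 a) - (min y1 b - min y1 a)) ∧
    (min x1 b - min x1 a) - (min x0 b - min x0 a) ≤ ah ∧
    (min x1 b - min x1 a) - (min y1 b - min y1 a) ≤ bh := by
  have m3 : min y1 b = y1 := min_eq_left (by omega)
  have m4 : min y1 a = y1 := min_eq_left h3
  have m5 : min y0 b = y0 := min_eq_left (by omega)
  have m6 : min y0 a = y0 := min_eq_left (by omega)
  rw [m3, m4, m5, m6]
  omega

lemma sub_feasible (T l r : ℕ) (d ahi bhi X I : ℕ → ℕ)
    (hl : 1 ≤ l) (hlr : l - 1 ≤ r) (hr : r ≤ T)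
    (hf : Feasible T d ahi bhi X I) :
    Feasible T (subd l r d) ahi bhi (sX d X l r) (sI d X l r) := by
  have hfl := flow hf
  have hm : cum d (l - 1) ≤ cum d r := cum_mono d hlr
  refine ⟨?_, ?_, ?_⟩
  · simp [sI, cum_zero]
  · have h1 := hfl T le_rfl
    have h2 : cum d r ≤ cum d T := cum_mono d hr
    have h0 : I T = 0 := hf.2.1
    have m1 : min (cum X T) (cum d r) = cum d r := min_eq_right (by omega)
    have m2 : min (cum X T) (cum d (l - 1)) = cum d (l - 1) := min_eq_right (by omega)
    have m3 : min (cum d T) (cum d r) = cum d r := min_eq_right h2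
    have m4 : min (cum d T) (cum d (l - 1)) = cum d (l - 1) := min_eq_right (by omega)
    simp only [sI, m1, m2, m3, m4]
    omega
  · intro t ht
    simp only [Finset.mem_Icc] at ht
    have hP : cum X t = cum X (t - 1) + X t := cum_succ X ht.1
    have hD : cum d t = cum d (t - 1) + d t := cum_succ d ht.1
    have hf1 := hfl t ht.2
    have hf0 := hfl (t - 1) (by omega)
    have hcaps := (hf.2.2 t (Finset.mem_Icc.mpr ht)).2
    simp only [sI, sX]
    rcases le_or_gt l t with hlt | hlt
    · rcases le_or_gt t r with htr | htr
      · have h2 : cum d (l - 1) ≤ cum d (t - 1) := cum_mono d (by omega)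
        have h3 : cum d t ≤ cum d r := cum_mono d htr
        have hd : subd l r d t = d t := by simp [subd, Finset.mem_Icc]; omega
        rw [hd]
        exact arith_mid _ _ _ _ _ _ _ _ (I (t-1)) _ _ _ hP hD hf1 hf0 h2 h3
          hcaps.1 hcaps.2
      · have h3 : cum d r ≤ cum d (t - 1) := cum_mono d (by omega)
        have hd : subd l r d t = 0 := by simp [subd, Finset.mem_Icc]; omega
        rw [hd]
        exact arith_right _ _ _ _ _ _ _ _ (I (t-1)) _ _ _ hP hD hf1 hf0 hm h3
          hcaps.1 hcaps.2
    · have h3 : cum d t ≤ cum d (l - 1) := cum_mono d (by omega)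
      have hd : subd l r d t = 0 := by simp [subd, Finset.mem_Icc]; omega
      rw [hd]
      exact arith_left _ _ _ _ _ _ _ _ (I (t-1)) _ _ _ hP hD hf1 hf0 hm h3
        hcaps.1 hcaps.2

private lemma arith_split (x0 x1 y1 a b c It Xt : ℕ)
    (hab : a ≤ b) (hbc : b ≤ c) (hx1 : x1 ≤ c) (hy : y1 ≤ c)
    (hP : x1 = x0 + Xt) (hfe : x1 = y1 + It) :
    ((min x1 a - min x1 0) - (min x0 a - min x0 0))
      + ((min x1 b - min x1 a) - (min x0 b - min x0 a))
      + ((min x1 c - min x1 b) - (min x0 c - min x0 b)) = Xt ∧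
    ((min x1 a - min x1 0) - (min y1 a - min y1 0))
      + ((min x1 b - min x1 a) - (min y1 b - min y1 a))
      + ((min x1 c - min x1 b) - (min y1 c - min y1 b)) = It := by
  have m1 : min x1 c = x1 := min_eq_left hx1
  have m2 : min x0 c = x0 := min_eq_left (by omega)
  have m3 : min y1 c = y1 := min_eq_left hy
  simp only [Nat.min_zero, m1, m2, m3]
  omega

lemma split_sums (T u v t : ℕ) (d ahi bhi X I : ℕ → ℕ)
    (hu : 1 ≤ u) (huv : u ≤ v) (hv : v ≤ T)
    (hf : Feasible T d ahi bhi X I) (ht : 1 ≤ t) (htT : t ≤ T) :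
    sX d X 1 (u - 1) t + sX d X u v t + sX d X (v + 1) T t = X t ∧
    sI d X 1 (u - 1) t + sI d X u v t + sI d X (v + 1) T t = I t := by
  have hfl := flow hf
  have h1 : cum d (u - 1) ≤ cum d v := cum_mono d (by omega)
  have h2 : cum d v ≤ cum d T := cum_mono d hv
  have hPT := hfl T le_rfl
  have hIT : I T = 0 := hf.2.1
  have hPt := hfl t htT
  have hle : cum X t ≤ cum X T := cum_mono X htT
  have hled : cum d t ≤ cum d T := cum_mono d htT
  have hP : cum X t = cum X (t - 1) + X t := cum_succ X ht
  have hz : (1 : ℕ) - 1 = 0 := rfl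
  have hvv : v + 1 - 1 = v := rfl
  simp only [sX, sI, hz, hvv, cum_zero]
  exact arith_split _ _ _ _ _ _ _ _ h1 h2 (by omega) (by omega) hP (by omega)

end WispAux


/-- Soundness of the WISP-support filtering rule: if `lbBefore` is a lower bound
on the cost of satisfying demands `d_1..d_{u-1}` (sub-problem `(L_{1,u-1})`),
`lbAfter` a lower bound for demands `d_{v+1}..d_T` (sub-problem `(L_{v+1,T})`),
`fv` (resp. `frv`) a lower bound on the cost, within sub-problem `(L_{u,v})`, of
the periods `1..t0` (resp. `t0+1..T`) of any sub-feasible plan with `I t0 = i`,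
and `i < Σ_{k=t0+1}^{v} d_k`, then
`lbBefore + fv + frv + lbAfter > C̅` implies that no feasible solution of `(L)`
of cost at most `C̅` has `I t0 = i`. -/
theorem wisp_support_filtering_sound
    (T u v t0 : ℕ) (hu : 1 ≤ u) (huv : u < v) (hv : v ≤ T)
    (ht0 : u ≤ t0 ∧ t0 ≤ v)
    (d p h s ahi bhi : ℕ → ℕ)
    (i lbBefore lbAfter fv frv Cbar : ℕ)
    (hlbB : ∀ X' I' : ℕ → ℕ, Feasible T (subd 1 (u - 1) d) ahi bhi X' I' →
      lbBefore ≤ planCost T p h (subs 1 (u - 1) s) X' I')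
    (hlbA : ∀ X' I' : ℕ → ℕ, Feasible T (subd (v + 1) T d) ahi bhi X' I' →
      lbAfter ≤ planCost T p h (subs (v + 1) T s) X' I')
    (hf : ∀ X' I' : ℕ → ℕ, Feasible T (subd u v d) ahi bhi X' I' → I' t0 = i →
      fv ≤ ∑ r ∈ Finset.Icc 1 t0,
        (p r * X' r + h r * I' r + if 0 < X' r then subs u v s r else 0))
    (hfr : ∀ X' I' : ℕ → ℕ, Feasible T (subd u v d) ahi bhi X' I' → I' t0 = i →
      frv ≤ ∑ r ∈ Finset.Icc (t0 + 1) T,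
        (p r * X' r + h r * I' r + if 0 < X' r then subs u v s r else 0))
    (hi : i < ∑ k ∈ Finset.Icc (t0 + 1) v, d k)
    (hcut : Cbar < lbBefore + fv + frv + lbAfter) :
    ¬ ∃ X I : ℕ → ℕ, Feasible T d ahi bhi X I ∧ I t0 = i ∧
      planCost T p h s X I ≤ Cbar := by
  rintro ⟨X, I, hfe, hIt0, hcost⟩
  have feasB := WispAux.sub_feasible T 1 (u - 1) d ahi bhi X I (le_refl 1) (by omega) (by omega) hfe
  have feasM := WispAux.sub_feasible T u v d ahi bhi X I hu (by omega) (by omega) hfe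
  have feasA := WispAux.sub_feasible T (v + 1) T d ahi bhi X I (by omega) (by omega) le_rfl hfe
  -- middle inventory at t0 equals i
  have hsum : WispAux.cum d t0 + ∑ k ∈ Finset.Icc (t0 + 1) v, d k = WispAux.cum d v := by
    have e1 : Finset.Icc 1 t0 = Finset.Ioc 0 t0 := by
      ext x; simp [Finset.mem_Icc, Finset.mem_Ioc]; omega
    have e2 : Finset.Icc (t0 + 1) v = Finset.Ioc t0 v := by
      ext x; simp [Finset.mem_Icc, Finset.mem_Ioc]
    have e3 : Finset.Icc 1 v = Finset.Ioc 0 v := by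
      ext x; simp [Finset.mem_Icc, Finset.mem_Ioc]; omega
    simp only [WispAux.cum, e1, e2, e3]
    exact Finset.sum_Ioc_consecutive _ (Nat.zero_le _) ht0.2
  have hIm : WispAux.sI d X u v t0 = i := by
    have hPt := WispAux.flow hfe t0 (by omega)
    have h1 : WispAux.cum d (u - 1) ≤ WispAux.cum d t0 := WispAux.cum_mono d (by omega)
    have m1 : min (WispAux.cum X t0) (WispAux.cum d v) = WispAux.cum X t0 :=
      min_eq_left (by omega)
    have m2 : min (WispAux.cum X t0) (WispAux.cum d (u - 1)) = WispAux.cum d (u - 1) :=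
      min_eq_right (by omega)
    have m3 : min (WispAux.cum d t0) (WispAux.cum d v) = WispAux.cum d t0 :=
      min_eq_left (by omega)
    have m4 : min (WispAux.cum d t0) (WispAux.cum d (u - 1)) = WispAux.cum d (u - 1) :=
      min_eq_right h1
    simp only [WispAux.sI, m1, m2, m3, m4]
    omega
  have c1 := hlbB _ _ feasB
  have c2 := hlbA _ _ feasA
  have c3 := hf _ _ feasM hIm
  have c4 := hfr _ _ feasM hIm
  -- merge the two middle sums into one over Icc 1 T
  have hmerge : (∑ r ∈ Finset.Icc 1 t0,
        (p r * WispAux.sX d X u v r + h r * WispAux.sI d X u v r +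
          if 0 < WispAux.sX d X u v r then subs u v s r else 0))
      + (∑ r ∈ Finset.Icc (t0 + 1) T,
        (p r * WispAux.sX d X u v r + h r * WispAux.sI d X u v r +
          if 0 < WispAux.sX d X u v r then subs u v s r else 0))
      = ∑ r ∈ Finset.Icc 1 T,
        (p r * WispAux.sX d X u v r + h r * WispAux.sI d X u v r +
          if 0 < WispAux.sX d X u v r then subs u v s r else 0) := by
    have e1 : Finset.Icc 1 t0 = Finset.Ioc 0 t0 := by
      ext x; simp [Finset.mem_Icc, Finset.mem_Ioc]; omega
    have e2 : Finset.Icc (t0 + 1) T = Finset.Ioc t0 T := by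
      ext x; simp [Finset.mem_Icc, Finset.mem_Ioc]
    have e3 : Finset.Icc 1 T = Finset.Ioc 0 T := by
      ext x; simp [Finset.mem_Icc, Finset.mem_Ioc]; omega
    rw [e1, e2, e3]
    exact Finset.sum_Ioc_consecutive _ (Nat.zero_le _) (by omega)
  -- termwise comparison
  have key : planCost T p h (subs 1 (u - 1) s) (WispAux.sX d X 1 (u - 1)) (WispAux.sI d X 1 (u - 1))
      + (∑ r ∈ Finset.Icc 1 T,
        (p r * WispAux.sX d X u v r + h r * WispAux.sI d X u v r +
          if 0 < WispAux.sX d X u v r then subs u v s r else 0))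
      + planCost T p h (subs (v + 1) T s) (WispAux.sX d X (v + 1) T) (WispAux.sI d X (v + 1) T)
      ≤ planCost T p h s X I := by
    simp only [planCost, ← Finset.sum_add_distrib]
    apply Finset.sum_le_sum
    intro t htmem
    simp only [Finset.mem_Icc] at htmem
    obtain ⟨hXs, hIs⟩ := WispAux.split_sums T u v t d ahi bhi X I hu (by omega) hv hfe
      htmem.1 htmem.2
    have e1 : p t * X t = p t * WispAux.sX d X 1 (u - 1) t + p t * WispAux.sX d X u v t
        + p t * WispAux.sX d X (v + 1) T t := by rw [← hXs]; ring
    have e2 : h t * I t = h t * WispAux.sI d X 1 (u - 1) t + h t * WispAux.sI d X u v t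
        + h t * WispAux.sI d X (v + 1) T t := by rw [← hIs]; ring
    have hsetup : (if 0 < WispAux.sX d X 1 (u - 1) t then subs 1 (u - 1) s t else 0)
        + (if 0 < WispAux.sX d X u v t then subs u v s t else 0)
        + (if 0 < WispAux.sX d X (v + 1) T t then subs (v + 1) T s t else 0)
        ≤ if 0 < X t then s t else 0 := by
      by_cases hx : 0 < X t
      · simp only [hx, if_true, subs, Finset.mem_Icc]
        split_ifs <;> simp <;> omega
      · have hb : WispAux.sX d X 1 (u - 1) t = 0 := by omega
        have hmm : WispAux.sX d X u v t = 0 := by omega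
        have ha : WispAux.sX d X (v + 1) T t = 0 := by omega
        simp [hb, hmm, ha, hx]
    rw [e1, e2]
    omega
  rw [← hmerge] at key
  omega
end
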